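/- arXiv:2511.21625 — 2 statements merged into one kernel-verified Lean document; each statement's English description precedes it below -/
import Mathlib

section
/- Let p ≥ 1 and L ≥ 2. For each ℓ = 2,…,L let W_ℓ be an invertible real p×p matrix whose condition number satisfies ‖W_ℓ‖₂‖W_ℓ⁻¹‖₂ ≤ κ, and let g_ℓ : ℝ → ℝ be differentiable with l ≤ g_ℓ′(x) ≤ u for all x ∈ ℝ, where 0 < l ≤ u. Let f = f_{W_L,g_L} ∘ ⋯ ∘ f_{W_2,g_2} be the composition of the associated layer maps. Then f is a bijection of ℝ^p, and there exist constants K, M > 0 such that f is K-Lipschitz with respect to the Euclidean norm, the inverse f⁻¹ is M-Lipschitz with respect to the Euclidean norm, and K·M ≤ (κ·u/l)^{L−1}. -/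
/-!
Each layer is the coordinatewise map of `g` precomposed with `x ↦ Wᵀx`. In the Euclidean norm the
linear part is `‖W‖`-Lipschitz and `‖W⁻¹‖`-antilipschitz (since `‖Wᵀ‖ = ‖W‖`), and by the mean value
theorem `l ≤ g' ≤ u` makes the coordinatewise map `u`-Lipschitz and `l⁻¹`-antilipschitz, and `g` a
bijection of `ℝ`. Hence layer `ℓ` is a bijection with Lipschitz constant `u‖W_ℓ‖` whose inverse has
Lipschitz constant `‖W_ℓ⁻¹‖ / l`; these constants multiply along the composition, and each
layer contributes a factor at most `κu/l` to their product.
-/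

open scoped Matrix

/-- The spectral norm `‖W‖₂` of a real `p × p` matrix `W`: the operator norm of the
linear map `x ↦ W x` on the Euclidean space `ℝ^p`. -/
noncomputable def specNorm {p : ℕ} (W : Matrix (Fin p) (Fin p) ℝ) : ℝ :=
  ‖LinearMap.toContinuousLinearMap (Matrix.toEuclideanLin (𝕜 := ℝ) W)‖

/-- The layer map `f_{W,g} : ℝ^p → ℝ^p` sending `x` to the vector whose `j`-th
coordinate is `g((Wᵀ x)_j)`. -/
noncomputable def layerMap {p : ℕ} (W : Matrix (Fin p) (Fin p) ℝ) (g : ℝ → ℝ) :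
    EuclideanSpace ℝ (Fin p) → EuclideanSpace ℝ (Fin p) :=
  fun x => WithLp.toLp 2 (fun j => g (Wᵀ.mulVec x j))

/-- The network `f = f_{W_L,g_L} ∘ ⋯ ∘ f_{W_2,g_2}`, where the index `i : Fin (L-1)`
corresponds to the layer `ℓ = i + 2` (so the layer with index `0` is applied first). -/
noncomputable def netF {p L : ℕ} (W : Fin (L - 1) → Matrix (Fin p) (Fin p) ℝ)
    (g : Fin (L - 1) → ℝ → ℝ) : EuclideanSpace ℝ (Fin p) → EuclideanSpace ℝ (Fin p) :=
  fun x => Fin.foldl (L - 1) (fun y i => layerMap (W i) (g i) y) x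

open scoped NNReal
open Function

section Scalar

variable {f : ℝ → ℝ} {l u : ℝ}

theorem dist_le_mul_dist_of_abs_deriv_le (hf : Differentiable ℝ f) (hf' : ∀ x, |deriv f x| ≤ u)
    (a b : ℝ) : dist (f a) (f b) ≤ u * dist a b :=
  convex_univ.norm_image_sub_le_of_norm_deriv_le (fun x _ => hf x) (fun x _ => hf' x)
    (Set.mem_univ b) (Set.mem_univ a)

theorem mul_dist_le_dist_of_le_deriv (hf : Differentiable ℝ f) (hf' : ∀ x, l ≤ deriv f x)
    (a b : ℝ) : l * dist a b ≤ dist (f a) (f b) := by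
  wlog hab : a ≤ b generalizing a b
  · rw [dist_comm, dist_comm (f a)]
    exact this b a (le_of_not_ge hab)
  rw [dist_comm, dist_comm (f a), Real.dist_eq, Real.dist_eq, abs_of_nonneg (sub_nonneg.2 hab)]
  exact (mul_sub_le_image_sub_of_le_deriv hf hf' hab).trans (le_abs_self _)

theorem bijective_of_le_deriv (hf : Differentiable ℝ f) (hl : 0 < l) (hf' : ∀ x, l ≤ deriv f x) :
    Bijective f := by
  refine ⟨(strictMono_of_deriv_pos fun x => hl.trans_le (hf' x)).injective, fun y => ?_⟩
  set r := |y - f 0| / l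
  have hr : 0 ≤ r := by positivity
  have hlr : l * r = |y - f 0| := mul_div_cancel₀ _ hl.ne'
  have hleft := mul_sub_le_image_sub_of_le_deriv hf hf' (neg_nonpos.2 hr)
  have hright := mul_sub_le_image_sub_of_le_deriv hf hf' hr
  refine mem_range_of_exists_le_of_exists_ge hf.continuous ⟨-r, ?_⟩ ⟨r, ?_⟩
  · linarith [neg_abs_le (y - f 0)]
  · linarith [le_abs_self (y - f 0)]

end Scalar

theorem EuclideanSpace.dist_le_mul_of_forall_dist_le {𝕜 ι : Type*} [RCLike 𝕜] [Fintype ι]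
    {x y x' y' : EuclideanSpace 𝕜 ι} {C : ℝ} (hC : 0 ≤ C)
    (h : ∀ i, dist (x i) (y i) ≤ C * dist (x' i) (y' i)) : dist x y ≤ C * dist x' y' := by
  rw [EuclideanSpace.dist_eq, EuclideanSpace.dist_eq, ← Real.sqrt_sq hC,
    ← Real.sqrt_mul (sq_nonneg C), Finset.mul_sum]
  refine Real.sqrt_le_sqrt (Finset.sum_le_sum fun i _ => ?_)
  rw [← mul_pow]
  exact pow_le_pow_left₀ dist_nonneg (h i) 2

section FinFoldl

variable {α : Type*} {n : ℕ}

theorem finFoldl_succ_eq_comp (F : Fin (n + 1) → α → α) :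
    (fun x => Fin.foldl (n + 1) (fun y i => F i y) x) =
      (fun x => Fin.foldl n (fun y i => F i.succ y) x) ∘ F 0 :=
  funext fun _ => Fin.foldl_succ ..

theorem bijective_finFoldl {F : Fin n → α → α} (hF : ∀ i, Bijective (F i)) :
    Bijective (fun x => Fin.foldl n (fun y i => F i y) x) := by
  induction n with
  | zero => exact bijective_id
  | succ n ih =>
    rw [finFoldl_succ_eq_comp]
    exact (ih fun i => hF i.succ).comp (hF 0)

variable [PseudoEMetricSpace α]

theorem lipschitzWith_finFoldl {F : Fin n → α → α} {K : Fin n → ℝ≥0}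
    (hF : ∀ i, LipschitzWith (K i) (F i)) :
    LipschitzWith (∏ i, K i) (fun x => Fin.foldl n (fun y i => F i y) x) := by
  induction n with
  | zero => exact LipschitzWith.id
  | succ n ih =>
    rw [finFoldl_succ_eq_comp, Fin.prod_univ_succ, mul_comm]
    exact (ih fun i => hF i.succ).comp (hF 0)

theorem antilipschitzWith_finFoldl {F : Fin n → α → α} {K : Fin n → ℝ≥0}
    (hF : ∀ i, AntilipschitzWith (K i) (F i)) :
    AntilipschitzWith (∏ i, K i) (fun x => Fin.foldl n (fun y i => F i y) x) := by
  induction n with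
  | zero => exact AntilipschitzWith.id
  | succ n ih =>
    rw [finFoldl_succ_eq_comp, Fin.prod_univ_succ]
    exact (ih fun i => hF i.succ).comp (hF 0)

end FinFoldl

section L2OpNorm

open scoped Matrix.Norms.L2Operator

variable {𝕜 n : Type*} [RCLike 𝕜] [Fintype n] [DecidableEq n]

theorem Matrix.dist_toEuclideanCLM_le (A : Matrix n n 𝕜) (x y : EuclideanSpace 𝕜 n) :
    dist (toEuclideanCLM (𝕜 := 𝕜) A x) (toEuclideanCLM (𝕜 := 𝕜) A y) ≤ ‖A‖ * dist x y :=
  ContinuousLinearMap.dist_le_opNorm _ x y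

theorem Matrix.dist_le_mul_dist_toEuclideanCLM {A : Matrix n n 𝕜} (hA : IsUnit A)
    (x y : EuclideanSpace 𝕜 n) :
    dist x y ≤ ‖A⁻¹‖ * dist (toEuclideanCLM (𝕜 := 𝕜) A x) (toEuclideanCLM (𝕜 := 𝕜) A y) := by
  have hinv : ∀ z, toEuclideanCLM (𝕜 := 𝕜) A⁻¹ (toEuclideanCLM (𝕜 := 𝕜) A z) = z := fun z => by
    change (toEuclideanCLM (𝕜 := 𝕜) A⁻¹ * toEuclideanCLM (𝕜 := 𝕜) A) z = z
    rw [← map_mul, nonsing_inv_mul _ ((isUnit_iff_isUnit_det A).1 hA), map_one]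
    rfl
  calc dist x y = dist (toEuclideanCLM (𝕜 := 𝕜) A⁻¹ (toEuclideanCLM (𝕜 := 𝕜) A x))
        (toEuclideanCLM (𝕜 := 𝕜) A⁻¹ (toEuclideanCLM (𝕜 := 𝕜) A y)) := by rw [hinv, hinv]
    _ ≤ _ := dist_toEuclideanCLM_le _ _ _

theorem Matrix.bijective_toEuclideanCLM {A : Matrix n n 𝕜} (hA : IsUnit A) :
    Bijective (toEuclideanCLM (𝕜 := 𝕜) A) :=
  ContinuousLinearMap.isUnit_iff_bijective.1 (hA.map _)

theorem Matrix.l2_opNorm_transpose (A : Matrix n n ℝ) : ‖Aᵀ‖ = ‖A‖ := by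
  rw [← conjTranspose_eq_transpose_of_trivial, l2_opNorm_conjTranspose]

theorem Matrix.l2_opNorm_pos [Nonempty n] {A : Matrix n n 𝕜} (hA : IsUnit A) : 0 < ‖A‖ :=
  norm_pos_iff.2 hA.ne_zero

theorem specNorm_eq_l2_opNorm {p : ℕ} (W : Matrix (Fin p) (Fin p) ℝ) : specNorm W = ‖W‖ := rfl

end L2OpNorm

theorem layerMap_eq_comp {p : ℕ} (W : Matrix (Fin p) (Fin p) ℝ) (g : ℝ → ℝ) :
    layerMap W g = WithLp.map 2 (g ∘ ·) ∘ Matrix.toEuclideanCLM (𝕜 := ℝ) Wᵀ := rfl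

section Layer

open scoped Matrix.Norms.L2Operator

variable {p : ℕ} {W : Matrix (Fin p) (Fin p) ℝ} {g : ℝ → ℝ}

theorem lipschitzWith_layerMap {u : ℝ} (hu : 0 ≤ u) (hg : ∀ a b, dist (g a) (g b) ≤ u * dist a b) :
    LipschitzWith (u * specNorm W).toNNReal (layerMap W g) :=
  LipschitzWith.of_dist_le' fun x y => calc
    dist (layerMap W g x) (layerMap W g y)
        ≤ u * dist (Matrix.toEuclideanCLM (𝕜 := ℝ) Wᵀ x) (Matrix.toEuclideanCLM (𝕜 := ℝ) Wᵀ y) :=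
      EuclideanSpace.dist_le_mul_of_forall_dist_le hu fun _ => hg _ _
    _ ≤ u * (‖Wᵀ‖ * dist x y) := by gcongr; exact Matrix.dist_toEuclideanCLM_le _ _ _
    _ = u * specNorm W * dist x y := by
      rw [Matrix.l2_opNorm_transpose, specNorm_eq_l2_opNorm, mul_assoc]

theorem antilipschitzWith_layerMap {l : ℝ} (hW : IsUnit W) (hl : 0 < l)
    (hg : ∀ a b, l * dist a b ≤ dist (g a) (g b)) :
    AntilipschitzWith (specNorm W⁻¹ / l).toNNReal (layerMap W g) := by
  refine AntilipschitzWith.of_le_mul_dist fun x y => ?_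
  calc dist x y
      ≤ ‖Wᵀ⁻¹‖ * dist (Matrix.toEuclideanCLM (𝕜 := ℝ) Wᵀ x) (Matrix.toEuclideanCLM (𝕜 := ℝ) Wᵀ y) :=
        Matrix.dist_le_mul_dist_toEuclideanCLM ((Matrix.isUnit_transpose _).2 hW) x y
    _ ≤ ‖Wᵀ⁻¹‖ * (l⁻¹ * dist (layerMap W g x) (layerMap W g y)) := by
        gcongr
        exact EuclideanSpace.dist_le_mul_of_forall_dist_le (inv_nonneg.2 hl.le)
          fun _ => (le_inv_mul_iff₀ hl).2 (hg _ _)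
    _ = specNorm W⁻¹ / l * dist (layerMap W g x) (layerMap W g y) := by
        rw [← Matrix.transpose_nonsing_inv, Matrix.l2_opNorm_transpose, specNorm_eq_l2_opNorm]
        ring
    _ ≤ (specNorm W⁻¹ / l).toNNReal * dist (layerMap W g x) (layerMap W g y) := by
        gcongr
        exact Real.le_coe_toNNReal _

theorem bijective_layerMap (hW : IsUnit W) (hg : Bijective g) : Bijective (layerMap W g) := by
  rw [layerMap_eq_comp]
  exact ((WithLp.toLp_bijective 2).comp (hg.comp_left.comp (WithLp.ofLp_bijective 2))).comp
    (Matrix.bijective_toEuclideanCLM ((Matrix.isUnit_transpose _).2 hW))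

theorem specNorm_pos [Nonempty (Fin p)] (hW : IsUnit W) : 0 < specNorm W :=
  Matrix.l2_opNorm_pos hW

end Layer

theorem stmt0_general (p L : ℕ) (hp : 1 ≤ p)
    (W : Fin (L - 1) → Matrix (Fin p) (Fin p) ℝ) (g : Fin (L - 1) → ℝ → ℝ)
    (l u κ : ℝ) (hl : 0 < l) (hlu : l ≤ u)
    (hWinv : ∀ i, IsUnit (W i))
    (hcond : ∀ i, specNorm (W i) * specNorm (W i)⁻¹ ≤ κ)
    (hgdiff : ∀ i, Differentiable ℝ (g i))
    (hgderiv : ∀ i x, l ≤ deriv (g i) x ∧ deriv (g i) x ≤ u) :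
    Function.Bijective (netF W g) ∧
      ∃ K M : ℝ, 0 < K ∧ 0 < M ∧
        LipschitzWith K.toNNReal (netF W g) ∧
        LipschitzWith M.toNNReal (Function.invFun (netF W g)) ∧
        K * M ≤ (κ * u / l) ^ (L - 1) := by
  have : Nonempty (Fin p) := ⟨⟨0, hp⟩⟩
  have hu : 0 < u := hl.trans_le hlu
  have hg_lower i : ∀ a b, l * dist a b ≤ dist (g i a) (g i b) :=
    mul_dist_le_dist_of_le_deriv (hgdiff i) fun x => (hgderiv i x).1
  have hg_upper i : ∀ a b, dist (g i a) (g i b) ≤ u * dist a b :=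
    dist_le_mul_dist_of_abs_deriv_le (hgdiff i) fun x =>
      abs_le.2 ⟨by linarith [hgderiv i x], (hgderiv i x).2⟩
  have hbij : Bijective (netF W g) := bijective_finFoldl fun i =>
    bijective_layerMap (hWinv i) (bijective_of_le_deriv (hgdiff i) hl fun x => (hgderiv i x).1)
  have hK i : 0 < u * specNorm (W i) := mul_pos hu (specNorm_pos (hWinv i))
  have hM i : 0 < specNorm (W i)⁻¹ / l :=
    div_pos (specNorm_pos (Matrix.isUnit_nonsing_inv_iff.2 (hWinv i))) hl
  refine ⟨hbij, ∏ i, u * specNorm (W i), ∏ i, specNorm (W i)⁻¹ / l,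
    Finset.prod_pos fun i _ => hK i, Finset.prod_pos fun i _ => hM i, ?_, ?_, ?_⟩
  · rw [Real.toNNReal_prod_of_nonneg fun i _ => (hK i).le]
    exact lipschitzWith_finFoldl fun i => lipschitzWith_layerMap hu.le (hg_upper i)
  · rw [Real.toNNReal_prod_of_nonneg fun i _ => (hM i).le]
    exact (antilipschitzWith_finFoldl fun i =>
      antilipschitzWith_layerMap (hWinv i) hl (hg_lower i)).to_rightInverse
        (rightInverse_invFun hbij.2)
  · have hKM i : u * specNorm (W i) * (specNorm (W i)⁻¹ / l) ≤ κ * u / l :=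
      calc u * specNorm (W i) * (specNorm (W i)⁻¹ / l)
          = specNorm (W i) * specNorm (W i)⁻¹ * u / l := by ring
        _ ≤ κ * u / l := by gcongr; exact hcond i
    calc (∏ i, u * specNorm (W i)) * ∏ i, specNorm (W i)⁻¹ / l
        = ∏ i, u * specNorm (W i) * (specNorm (W i)⁻¹ / l) := Finset.prod_mul_distrib.symm
      _ ≤ ∏ _i : Fin (L - 1), κ * u / l :=
        Finset.prod_le_prod (fun i _ => (mul_pos (hK i) (hM i)).le) fun i _ => hKM i
      _ = (κ * u / l) ^ (L - 1) := by rw [Finset.prod_const, Finset.card_fin]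

theorem stmt0 (p L : ℕ) (hp : 1 ≤ p) (hL : 2 ≤ L)
    (W : Fin (L - 1) → Matrix (Fin p) (Fin p) ℝ) (g : Fin (L - 1) → ℝ → ℝ)
    (l u κ : ℝ) (hl : 0 < l) (hlu : l ≤ u)
    (hWinv : ∀ i, IsUnit (W i))
    (hcond : ∀ i, specNorm (W i) * specNorm (W i)⁻¹ ≤ κ)
    (hgdiff : ∀ i, Differentiable ℝ (g i))
    (hgderiv : ∀ i x, l ≤ deriv (g i) x ∧ deriv (g i) x ≤ u) :
    Function.Bijective (netF W g) ∧
      ∃ K M : ℝ, 0 < K ∧ 0 < M ∧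
        LipschitzWith K.toNNReal (netF W g) ∧
        LipschitzWith M.toNNReal (Function.invFun (netF W g)) ∧
        K * M ≤ (κ * u / l) ^ (L - 1) :=
  stmt0_general p L hp W g l u κ hl hlu hWinv hcond hgdiff hgderiv
end

section
/- Let W be an invertible real p×p matrix and let g : ℝ → ℝ be differentiable with l ≤ g′(x) ≤ u for all x ∈ ℝ, where 0 < l ≤ u. Then the layer map f_{W,g} : ℝ^p → ℝ^p is a bijection; it is Lipschitz with constant ‖W‖₂ · u with respect to the Euclidean norm; its inverse is the map y ↦ (Wᵀ)⁻¹(g⁻¹(y_1),…,g⁻¹(y_p)) and this inverse is Lipschitz with constant ‖W⁻¹‖₂ · (1/l). -/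
open scoped Matrix
open scoped NNReal

/-- The candidate inverse of the layer map: `y ↦ (Wᵀ)⁻¹ (g⁻¹(y_1), …, g⁻¹(y_p))`. -/
noncomputable def layerInv {p : ℕ} (W : Matrix (Fin p) (Fin p) ℝ) (g : ℝ → ℝ) :
    EuclideanSpace ℝ (Fin p) → EuclideanSpace ℝ (Fin p) :=
  fun y => WithLp.toLp 2 ((Wᵀ)⁻¹.mulVec (fun j => Function.invFun g (y j)))

section RealFunction

variable {g : ℝ → ℝ} {l u : ℝ}

lemma lipschitzWith_of_deriv_nonneg_of_deriv_le (hg : Differentiable ℝ g)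
    (h₀ : ∀ x, 0 ≤ deriv g x) (hu : ∀ x, deriv g x ≤ u) : LipschitzWith u.toNNReal g :=
  lipschitzWith_of_nnnorm_deriv_le hg fun x => by
    rw [Real.nnnorm_of_nonneg (h₀ x), ← Real.toNNReal_of_nonneg (h₀ x)]
    exact Real.toNNReal_le_toNNReal (hu x)

lemma antilipschitzWith_of_le_deriv (hl : 0 < l) (hg : Differentiable ℝ g)
    (h : ∀ x, l ≤ deriv g x) : AntilipschitzWith l⁻¹.toNNReal g := by
  refine AntilipschitzWith.of_le_mul_dist fun x y => ?_
  wlog hxy : x ≤ y generalizing x y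
  · rw [dist_comm, dist_comm (g x)]
    exact this y x (le_of_not_ge hxy)
  have hgrowth := mul_sub_le_image_sub_of_le_deriv hg h hxy
  rw [Real.coe_toNNReal _ (inv_nonneg.2 hl.le), inv_mul_eq_div, le_div_iff₀' hl, Real.dist_eq,
    Real.dist_eq, abs_sub_comm, abs_of_nonneg (sub_nonneg.2 hxy), abs_sub_comm]
  exact hgrowth.trans (le_abs_self _)

lemma surjective_of_le_deriv (hl : 0 < l) (hg : Differentiable ℝ g)
    (h : ∀ x, l ≤ deriv g x) : Function.Surjective g := by
  have hgrowth := mul_sub_le_image_sub_of_le_deriv hg h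
  refine hg.continuous.surjective ?_ ?_
  · refine Filter.tendsto_atTop_mono' _ ?_
      (Filter.tendsto_atTop_add_const_left _ (g 0) (Filter.tendsto_id.const_mul_atTop hl))
    filter_upwards [Filter.eventually_ge_atTop 0] with x hx
    dsimp only [id]
    linarith [hgrowth hx]
  · refine Filter.tendsto_atBot_mono' _ ?_
      (Filter.tendsto_atBot_add_const_left _ (g 0) (Filter.tendsto_id.const_mul_atBot hl))
    filter_upwards [Filter.eventually_le_atBot 0] with x hx
    dsimp only [id]
    linarith [hgrowth hx]

end RealFunction

lemma EuclideanSpace.lipschitzWith_map_coords {ι : Type*} [Fintype ι] {h : ℝ → ℝ} {K : ℝ≥0}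
    (hh : LipschitzWith K h) :
    LipschitzWith K fun x : EuclideanSpace ℝ ι => WithLp.toLp 2 fun j => h (x j) := by
  refine LipschitzWith.of_dist_le_mul fun x y => ?_
  simp only [EuclideanSpace.dist_eq]
  calc √(∑ j, dist (h (x j)) (h (y j)) ^ 2) ≤ √(∑ j, (K * dist (x j) (y j)) ^ 2) := by
        gcongr with j
        exact hh.dist_le_mul _ _
    _ = K * √(∑ j, dist (x j) (y j) ^ 2) := by
        simp_rw [mul_pow, ← Finset.mul_sum]
        rw [Real.sqrt_mul (by positivity), Real.sqrt_sq K.coe_nonneg]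

section Matrix

variable {p : ℕ}

lemma specNorm_transpose (W : Matrix (Fin p) (Fin p) ℝ) : specNorm Wᵀ = specNorm W := by
  unfold specNorm
  rw [← Matrix.conjTranspose_eq_transpose_of_trivial,
    Matrix.toEuclideanLin_conjTranspose_eq_adjoint, LinearMap.adjoint_toContinuousLinearMap]
  exact LinearIsometryEquiv.norm_map ContinuousLinearMap.adjoint _

lemma specNorm_nonneg (W : Matrix (Fin p) (Fin p) ℝ) : 0 ≤ specNorm W := norm_nonneg _

lemma lipschitzWith_toEuclideanLin (W : Matrix (Fin p) (Fin p) ℝ) :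
    LipschitzWith (specNorm W).toNNReal
      (LinearMap.toContinuousLinearMap (Matrix.toEuclideanLin (𝕜 := ℝ) W)) := by
  rw [specNorm, norm_toNNReal]
  exact ContinuousLinearMap.lipschitz _

lemma layerMap_eq_comp_s2 (W : Matrix (Fin p) (Fin p) ℝ) (g : ℝ → ℝ) :
    layerMap W g = (fun x : EuclideanSpace ℝ (Fin p) => WithLp.toLp 2 fun j => g (x j)) ∘
      LinearMap.toContinuousLinearMap (Matrix.toEuclideanLin (𝕜 := ℝ) Wᵀ) :=
  rfl

lemma layerInv_eq_comp (W : Matrix (Fin p) (Fin p) ℝ) (g : ℝ → ℝ) :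
    layerInv W g = LinearMap.toContinuousLinearMap (Matrix.toEuclideanLin (𝕜 := ℝ) (Wᵀ)⁻¹) ∘
      (fun y : EuclideanSpace ℝ (Fin p) => WithLp.toLp 2 fun j => Function.invFun g (y j)) :=
  rfl

lemma lipschitzWith_layerMap_s2 (W : Matrix (Fin p) (Fin p) ℝ) {g : ℝ → ℝ} {K : ℝ≥0}
    (hg : LipschitzWith K g) : LipschitzWith ((specNorm W).toNNReal * K) (layerMap W g) := by
  rw [mul_comm, ← specNorm_transpose, layerMap_eq_comp_s2]
  exact (EuclideanSpace.lipschitzWith_map_coords hg).comp (lipschitzWith_toEuclideanLin Wᵀ)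

lemma lipschitzWith_layerInv (W : Matrix (Fin p) (Fin p) ℝ) {g : ℝ → ℝ} {K : ℝ≥0}
    (hg : LipschitzWith K (Function.invFun g)) :
    LipschitzWith ((specNorm W⁻¹).toNNReal * K) (layerInv W g) := by
  rw [← specNorm_transpose, Matrix.transpose_nonsing_inv, layerInv_eq_comp]
  exact (lipschitzWith_toEuclideanLin (Wᵀ)⁻¹).comp (EuclideanSpace.lipschitzWith_map_coords hg)

lemma layerInv_leftInverse {W : Matrix (Fin p) (Fin p) ℝ} (hW : IsUnit W.det) {g : ℝ → ℝ}
    (hg : Function.Injective g) : Function.LeftInverse (layerInv W g) (layerMap W g) := by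
  intro x
  simp only [layerInv, layerMap, Function.leftInverse_invFun hg _]
  rw [Matrix.mulVec_mulVec, Matrix.nonsing_inv_mul _ (Matrix.isUnit_det_transpose _ hW),
    Matrix.one_mulVec]

lemma layerInv_rightInverse {W : Matrix (Fin p) (Fin p) ℝ} (hW : IsUnit W.det) {g : ℝ → ℝ}
    (hg : Function.Surjective g) : Function.RightInverse (layerInv W g) (layerMap W g) := by
  intro y
  simp only [layerInv, layerMap]
  rw [Matrix.mulVec_mulVec, Matrix.mul_nonsing_inv _ (Matrix.isUnit_det_transpose _ hW),
    Matrix.one_mulVec]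
  simp only [Function.rightInverse_invFun hg _]

end Matrix

theorem stmt2_general (p : ℕ) (W : Matrix (Fin p) (Fin p) ℝ) (hW : IsUnit W)
    (g : ℝ → ℝ) (l u : ℝ) (hl : 0 < l)
    (hgdiff : Differentiable ℝ g)
    (hgderiv : ∀ x, l ≤ deriv g x ∧ deriv g x ≤ u) :
    Function.Bijective (layerMap W g) ∧
      LipschitzWith (specNorm W * u).toNNReal (layerMap W g) ∧
      Function.LeftInverse (layerInv W g) (layerMap W g) ∧
      Function.RightInverse (layerInv W g) (layerMap W g) ∧
      LipschitzWith (specNorm W⁻¹ * (1 / l)).toNNReal (layerInv W g) := by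
  have hgl : ∀ x, l ≤ deriv g x := fun x => (hgderiv x).1
  have hg_lipschitz : LipschitzWith u.toNNReal g :=
    lipschitzWith_of_deriv_nonneg_of_deriv_le hgdiff (fun x => hl.le.trans (hgl x))
      fun x => (hgderiv x).2
  have hg_antilipschitz := antilipschitzWith_of_le_deriv hl hgdiff hgl
  have hg_surjective := surjective_of_le_deriv hl hgdiff hgl
  have hdet := (Matrix.isUnit_iff_isUnit_det W).1 hW
  have hleft := layerInv_leftInverse hdet hg_antilipschitz.injective
  have hright := layerInv_rightInverse hdet hg_surjective
  refine ⟨⟨hleft.injective, hright.surjective⟩, ?_, hleft, hright, ?_⟩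
  · rw [Real.toNNReal_mul (specNorm_nonneg W)]
    exact lipschitzWith_layerMap_s2 W hg_lipschitz
  · rw [Real.toNNReal_mul (specNorm_nonneg W⁻¹), one_div]
    exact lipschitzWith_layerInv W
      (hg_antilipschitz.to_rightInverse (Function.rightInverse_invFun hg_surjective))

theorem stmt2 (p : ℕ) (W : Matrix (Fin p) (Fin p) ℝ) (hW : IsUnit W)
    (g : ℝ → ℝ) (l u : ℝ) (hl : 0 < l) (hlu : l ≤ u)
    (hgdiff : Differentiable ℝ g)
    (hgderiv : ∀ x, l ≤ deriv g x ∧ deriv g x ≤ u) :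
    Function.Bijective (layerMap W g) ∧
      LipschitzWith (specNorm W * u).toNNReal (layerMap W g) ∧
      Function.LeftInverse (layerInv W g) (layerMap W g) ∧
      Function.RightInverse (layerInv W g) (layerMap W g) ∧
      LipschitzWith (specNorm W⁻¹ * (1 / l)).toNNReal (layerInv W g) :=
  stmt2_general p W hW g l u hl hgdiff hgderiv
end
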